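/- arXiv:2007.09419 — 3 statements merged into one kernel-verified Lean document; each statement's English description precedes it below -/
import Mathlib

section
/- Let γ₂ ≠ 0, Υ₁, Υ₂ ∈ ℝ and let W(x) = Υ₁ + Υ₂e^{γ₂x}. Suppose 𝒲 : [0,∞) → ℝ is continuous, ξ : [0,∞) → ℝ is continuously differentiable, and 𝒲 satisfies the renewal equation 𝒲(x) = W(x) + ∫₀ˣ W(x−y)ξ(y)𝒲(y)dy for all x ≥ 0. Then 𝒲 is twice continuously differentiable and satisfies the ODE 𝒲''(x) = ((Υ₁+Υ₂)ξ(x)+γ₂)𝒲'(x) + ((Υ₁+Υ₂)ξ'(x) − γ₂Υ₁ξ(x))𝒲(x), with initial conditions 𝒲(0) = Υ₁+Υ₂ and 𝒲'(0) = (Υ₁+Υ₂)²ξ(0) + Υ₂γ₂. -/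
open Set

/-!
Since `W (x - y) = Υ₁ + Υ₂ e^{γ₂ x} e^{-γ₂ y}`, the renewal integral is a combination of primitives
of continuous functions with coefficients `1` and `e^{γ₂ x}`, so `𝒲` is differentiable with
`𝒲' = γ₂ 𝒲 - γ₂ Υ₁ (1 + ∫₀ˣ ξ𝒲) + (Υ₁ + Υ₂) ξ 𝒲`. The right-hand side only involves `𝒲`, `ξ` and a
primitive, so it is differentiable again, and differentiating it gives the ODE.
-/

theorem ContinuousOn.continuous_comp_max {f : ℝ → ℝ} {a : ℝ} (hf : ContinuousOn f (Ici a)) :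
    Continuous fun y => f (max y a) :=
  hf.comp_continuous (continuous_id.max continuous_const) fun y => le_max_right y a

theorem contDiffOn_succ_of_hasDerivWithinAt {f f' : ℝ → ℝ} {s : Set ℝ} {n : ℕ}
    (hs : UniqueDiffOn ℝ s) (hf : ∀ x ∈ s, HasDerivWithinAt f (f' x) s x)
    (hf' : ContDiffOn ℝ n f' s) : ContDiffOn ℝ (n + 1) f s := by
  rw [contDiffOn_succ_iff_derivWithin hs]
  refine ⟨fun x hx => (hf x hx).differentiableWithinAt, by simp, ?_⟩
  exact hf'.congr fun x hx => (hf x hx).derivWithin (hs x hx)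

theorem hasDerivAt_integral_exp_mul_sub {g : ℝ → ℝ} (hg : Continuous g) (γ x : ℝ) :
    HasDerivAt (fun x => ∫ y in (0:ℝ)..x, Real.exp (γ * (x - y)) * g y)
      (γ * (∫ y in (0:ℝ)..x, Real.exp (γ * (x - y)) * g y) + g x) x := by
  have hsplit : ∀ x, (∫ y in (0:ℝ)..x, Real.exp (γ * (x - y)) * g y)
      = Real.exp (γ * x) * ∫ y in (0:ℝ)..x, Real.exp (-(γ * y)) * g y := by
    intro x
    rw [← intervalIntegral.integral_const_mul]
    congr 1 with y
    rw [mul_sub, sub_eq_add_neg, Real.exp_add, mul_assoc]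
  have hprim : Continuous fun y => Real.exp (-(γ * y)) * g y := by fun_prop
  have hexp : HasDerivAt (fun x => Real.exp (γ * x)) (Real.exp (γ * x) * γ) x := by
    simpa using ((hasDerivAt_id x).const_mul γ).exp
  have hd := hexp.mul (hprim.integral_hasStrictDerivAt 0 x).hasDerivAt
  rw [funext hsplit]
  refine hd.congr_deriv ?_
  rw [hsplit x, ← mul_assoc, ← Real.exp_add, add_neg_cancel, Real.exp_zero, one_mul]
  ring

section RenewalEquation

variable {γ Υ₁ Υ₂ : ℝ} {W 𝒲 g ξ ξ' : ℝ → ℝ}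

theorem exists_continuous_renewal_weight (hξ : ContinuousOn ξ (Ici 0))
    (h𝒲 : ContinuousOn 𝒲 (Ici 0))
    (hren : ∀ x, 0 ≤ x → 𝒲 x = W x + ∫ y in (0:ℝ)..x, W (x - y) * ξ y * 𝒲 y) :
    ∃ g : ℝ → ℝ, Continuous g ∧ (∀ y ∈ Ici (0:ℝ), g y = ξ y * 𝒲 y) ∧
      ∀ x, 0 ≤ x → 𝒲 x = W x + ∫ y in (0:ℝ)..x, W (x - y) * g y := by
  have hgξ : ∀ y ∈ Ici (0:ℝ), ξ (max y 0) * 𝒲 (max y 0) = ξ y * 𝒲 y :=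
    fun y hy => by rw [max_eq_left (mem_Ici.1 hy)]
  refine ⟨fun y => ξ (max y 0) * 𝒲 (max y 0), hξ.continuous_comp_max.mul h𝒲.continuous_comp_max,
    hgξ, fun x hx => (hren x hx).trans (congrArg _ (intervalIntegral.integral_congr ?_))⟩
  intro y hy
  rw [uIcc_of_le hx] at hy
  simp only [hgξ y hy.1, mul_assoc]

theorem hasDerivAt_renewal_integral (hW : ∀ x, W x = Υ₁ + Υ₂ * Real.exp (γ * x))
    (hg : Continuous g) (x : ℝ) :
    HasDerivAt (fun x => ∫ y in (0:ℝ)..x, W (x - y) * g y)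
      ((Υ₁ + Υ₂) * g x + γ * ((∫ y in (0:ℝ)..x, W (x - y) * g y) - Υ₁ * ∫ y in (0:ℝ)..x, g y))
      x := by
  have hsplit : ∀ x, (∫ y in (0:ℝ)..x, W (x - y) * g y)
      = Υ₁ * (∫ y in (0:ℝ)..x, g y) + Υ₂ * ∫ y in (0:ℝ)..x, Real.exp (γ * (x - y)) * g y := by
    intro x
    simp only [hW, add_mul, mul_assoc]
    rw [intervalIntegral.integral_add ((by fun_prop : Continuous _).intervalIntegrable _ _)
        ((by fun_prop : Continuous _).intervalIntegrable _ _),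
      intervalIntegral.integral_const_mul, intervalIntegral.integral_const_mul]
  have hd := ((hg.integral_hasStrictDerivAt 0 x).hasDerivAt.const_mul Υ₁).add
    ((hasDerivAt_integral_exp_mul_sub hg γ x).const_mul Υ₂)
  rw [funext hsplit]
  exact hd.congr_deriv (by rw [hsplit x]; ring)

noncomputable def renewalDeriv (γ Υ₁ Υ₂ : ℝ) (𝒲 g : ℝ → ℝ) (x : ℝ) : ℝ :=
  γ * 𝒲 x - γ * Υ₁ * (1 + ∫ y in (0:ℝ)..x, g y) + (Υ₁ + Υ₂) * g x

theorem hasDerivWithinAt_of_renewal (hW : ∀ x, W x = Υ₁ + Υ₂ * Real.exp (γ * x))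
    (hg : Continuous g) (hren : ∀ x, 0 ≤ x → 𝒲 x = W x + ∫ y in (0:ℝ)..x, W (x - y) * g y)
    {x : ℝ} (hx : x ∈ Ici 0) :
    HasDerivWithinAt 𝒲 (renewalDeriv γ Υ₁ Υ₂ 𝒲 g x) (Ici 0) x := by
  have hWd : HasDerivAt W (Υ₂ * (Real.exp (γ * x) * γ)) x := by
    simp only [funext hW]
    simpa using (((hasDerivAt_id x).const_mul γ).exp.const_mul Υ₂).const_add Υ₁
  have hd := (hWd.add (hasDerivAt_renewal_integral hW hg x)).hasDerivWithinAt (s := Ici 0)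
  refine (hd.congr (fun y hy => hren y hy) (hren x hx)).congr_deriv ?_
  rw [renewalDeriv, hren x hx, hW]
  ring

theorem hasDerivWithinAt_renewalDeriv (hW : ∀ x, W x = Υ₁ + Υ₂ * Real.exp (γ * x))
    (hg : Continuous g) (hren : ∀ x, 0 ≤ x → 𝒲 x = W x + ∫ y in (0:ℝ)..x, W (x - y) * g y)
    (hgξ : ∀ x ∈ Ici (0:ℝ), g x = ξ x * 𝒲 x)
    (hξ : ∀ x ∈ Ici (0:ℝ), HasDerivWithinAt ξ (ξ' x) (Ici 0) x) {x : ℝ} (hx : x ∈ Ici 0) :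
    HasDerivWithinAt (renewalDeriv γ Υ₁ Υ₂ 𝒲 g)
      (((Υ₁ + Υ₂) * ξ x + γ) * renewalDeriv γ Υ₁ Υ₂ 𝒲 g x
        + ((Υ₁ + Υ₂) * ξ' x - γ * Υ₁ * ξ x) * 𝒲 x) (Ici 0) x := by
  have h𝒲 := hasDerivWithinAt_of_renewal (γ := γ) (Υ₂ := Υ₂) hW hg hren hx
  have hgd : HasDerivWithinAt g (ξ' x * 𝒲 x + ξ x * renewalDeriv γ Υ₁ Υ₂ 𝒲 g x) (Ici 0) x :=
    ((hξ x hx).mul h𝒲).congr (fun y hy => hgξ y hy) (hgξ x hx)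
  have hd := ((h𝒲.const_mul γ).sub
    ((((hg.integral_hasStrictDerivAt 0 x).hasDerivAt.const_add 1).const_mul
      (γ * Υ₁)).hasDerivWithinAt)).add (hgd.const_mul (Υ₁ + Υ₂))
  refine hd.congr_deriv ?_
  rw [hgξ x hx]
  ring

end RenewalEquation

theorem stmt5_general (γ₂ Υ₁ Υ₂ : ℝ) (W 𝒲 ξ : ℝ → ℝ)
    (hW : ∀ x : ℝ, W x = Υ₁ + Υ₂ * Real.exp (γ₂ * x))
    (h𝒲c : ContinuousOn 𝒲 (Ici 0))
    (hξ : ContDiffOn ℝ 1 ξ (Ici 0))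
    (hren : ∀ x : ℝ, 0 ≤ x →
      𝒲 x = W x + ∫ y in (0:ℝ)..x, W (x - y) * ξ y * 𝒲 y) :
    ContDiffOn ℝ 2 𝒲 (Ici 0) ∧
    (∀ x : ℝ, 0 ≤ x →
      derivWithin (derivWithin 𝒲 (Ici 0)) (Ici 0) x =
        ((Υ₁ + Υ₂) * ξ x + γ₂) * derivWithin 𝒲 (Ici 0) x
          + ((Υ₁ + Υ₂) * derivWithin ξ (Ici 0) x - γ₂ * Υ₁ * ξ x) * 𝒲 x) ∧
    𝒲 0 = Υ₁ + Υ₂ ∧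
    derivWithin 𝒲 (Ici 0) 0 = (Υ₁ + Υ₂) ^ 2 * ξ 0 + Υ₂ * γ₂ := by
  have hU : UniqueDiffOn ℝ (Ici (0:ℝ)) := uniqueDiffOn_Ici 0
  obtain ⟨g, hg, hgξ, hren'⟩ := exists_continuous_renewal_weight hξ.continuousOn h𝒲c hren
  set D := renewalDeriv γ₂ Υ₁ Υ₂ 𝒲 g
  have h𝒲d : ∀ x ∈ Ici (0:ℝ), HasDerivWithinAt 𝒲 (D x) (Ici 0) x :=
    fun x hx => hasDerivWithinAt_of_renewal hW hg hren' hx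
  have hDd := fun x (hx : x ∈ Ici (0:ℝ)) => hasDerivWithinAt_renewalDeriv hW hg hren' hgξ
    (fun x hx => ((hξ.differentiableOn one_ne_zero) x hx).hasDerivWithinAt) hx
  have hderiv : ∀ x ∈ Ici (0:ℝ), derivWithin 𝒲 (Ici 0) x = D x :=
    fun x hx => (h𝒲d x hx).derivWithin (hU x hx)
  have hD1 : ContDiffOn ℝ 1 D (Ici 0) := by
    refine contDiffOn_succ_of_hasDerivWithinAt (n := 0) hU hDd (contDiffOn_zero.2 ?_)
    have hDc : ContinuousOn D (Ici 0) := fun x hx => (hDd x hx).continuousWithinAt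
    have hξ'c := hξ.continuousOn_derivWithin hU le_rfl
    exact (((continuousOn_const.mul hξ.continuousOn).add continuousOn_const).mul hDc).add
      (((continuousOn_const.mul hξ'c).sub (continuousOn_const.mul hξ.continuousOn)).mul h𝒲c)
  have h𝒲0 : 𝒲 0 = Υ₁ + Υ₂ := by simp [hren 0 le_rfl, hW]
  refine ⟨contDiffOn_succ_of_hasDerivWithinAt (n := 1) hU h𝒲d hD1, fun x hx => ?_, h𝒲0, ?_⟩
  · rw [derivWithin_congr hderiv (hderiv x hx), hderiv x hx, (hDd x hx).derivWithin (hU x hx)]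
  · simp only [hderiv 0 self_mem_Ici, D, renewalDeriv, hgξ 0 self_mem_Ici, h𝒲0,
      intervalIntegral.integral_same]
    ring

/-- The ω-scale function 𝒲 solving the renewal equation with
W(x) = Υ₁ + Υ₂e^{γ₂x} is C² on [0,∞) and solves the stated second-order ODE
with the stated initial conditions. -/
theorem stmt5 (γ₂ Υ₁ Υ₂ : ℝ) (hγ : γ₂ ≠ 0) (W 𝒲 ξ : ℝ → ℝ)
    (hW : ∀ x : ℝ, W x = Υ₁ + Υ₂ * Real.exp (γ₂ * x))
    (h𝒲c : ContinuousOn 𝒲 (Ici 0))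
    (hξ : ContDiffOn ℝ 1 ξ (Ici 0))
    (hren : ∀ x : ℝ, 0 ≤ x →
      𝒲 x = W x + ∫ y in (0:ℝ)..x, W (x - y) * ξ y * 𝒲 y) :
    ContDiffOn ℝ 2 𝒲 (Ici 0) ∧
    (∀ x : ℝ, 0 ≤ x →
      derivWithin (derivWithin 𝒲 (Ici 0)) (Ici 0) x =
        ((Υ₁ + Υ₂) * ξ x + γ₂) * derivWithin 𝒲 (Ici 0) x
          + ((Υ₁ + Υ₂) * derivWithin ξ (Ici 0) x - γ₂ * Υ₁ * ξ x) * 𝒲 x) ∧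
    𝒲 0 = Υ₁ + Υ₂ ∧
    derivWithin 𝒲 (Ici 0) 0 = (Υ₁ + Υ₂) ^ 2 * ξ 0 + Υ₂ * γ₂ :=
  stmt5_general γ₂ Υ₁ Υ₂ W 𝒲 ξ hW h𝒲c hξ hren
end

section
/- Let γ₂, γ₃ be nonzero reals with γ₂ ≠ γ₃, and Υ₁, Υ₂, Υ₃ ∈ ℝ with Υ₁ + Υ₂ + Υ₃ = 0. Let W(x) = Υ₁ + Υ₂e^{γ₂x} + Υ₃e^{γ₃x}. If 𝒲 : [0,∞) → ℝ is continuous, ξ is C¹, and 𝒲(x) = W(x) + ∫₀ˣ W(x−y)ξ(y)𝒲(y)dy for all x ≥ 0, then 𝒲 is three times continuously differentiable and 𝒲'''(x) = (γ₂+γ₃)𝒲''(x) + (Υ₂(γ₂−γ₃)ξ(x) − γ₂γ₃ − γ₃Υ₁ξ(x))𝒲'(x) + (Υ₂(γ₂−γ₃)ξ'(x) + γ₂γ₃Υ₁ξ(x) − γ₃Υ₁ξ'(x))𝒲(x), with 𝒲(0) = 0, 𝒲'(0) = Υ₂γ₂ + Υ₃γ₃, and 𝒲''(0) = Υ₂γ₂²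 + Υ₃γ₃². -/
/-!
The kernel `W` is the exponential sum `∑ cᵢ e^{aᵢ x}` with `c = (Υ₁, Υ₂, Υ₃)` and
`a = (0, γ₂, γ₃)`, so the renewal equation splits as `𝒲 = ∑ cᵢ Dᵢ`, where
`Dᵢ x = e^{aᵢ x} (1 + ∫₀ˣ e^{-aᵢ y} ξ y 𝒲 y dy)` solves `Dᵢ' = aᵢ Dᵢ + ξ 𝒲`.
Each differentiation multiplies the weights `cᵢ` by `aᵢ` and adds `(∑ cᵢ aᵢᵏ) ξ 𝒲`; since
`∑ cᵢ = W 0 = 0`, the first derivative carries no `ξ 𝒲` term, which is what makes `𝒲` one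
order smoother than `ξ 𝒲` would suggest. The `Dᵢ` terms cancel in the ODE because each `aᵢ` is a
root of `λ (λ - γ₂) (λ - γ₃)`.
-/

open Set Real

theorem hasDerivWithinAt_integral_of_continuousOn_Ici {g : ℝ → ℝ} {a x : ℝ}
    (hg : ContinuousOn g (Ici a)) (hx : a ≤ x) :
    HasDerivWithinAt (fun t => ∫ y in a..t, g y) (g x) (Ici a) x := by
  have hint : IntervalIntegrable g MeasureTheory.volume a x :=
    (hg.mono (by rw [uIcc_of_le hx]; exact Icc_subset_Ici_self)).intervalIntegrable
  have hmeas : MeasureTheory.AEStronglyMeasurable g (MeasureTheory.volume.restrict (Ici a)) :=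
    hg.aestronglyMeasurable measurableSet_Ici
  rcases hx.eq_or_lt with rfl | hx
  · exact intervalIntegral.integral_hasDerivWithinAt_right hint
      ⟨Ici a, Filter.mem_of_superset self_mem_nhdsWithin Ioi_subset_Ici_self, hmeas⟩
      ((hg a self_mem_Ici).mono Ioi_subset_Ici_self)
  · exact (intervalIntegral.integral_hasDerivAt_right hint ⟨Ici a, Ici_mem_nhds hx, hmeas⟩
      ((hg x hx.le).continuousAt (Ici_mem_nhds hx))).hasDerivWithinAt

/-- Variation of constants: the solution of `y' = a y + f`, `y 0 = 1`, on `[0, ∞)`. -/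
noncomputable def duhamel (a : ℝ) (f : ℝ → ℝ) (x : ℝ) : ℝ :=
  exp (a * x) * (1 + ∫ y in (0 : ℝ)..x, exp (-(a * y)) * f y)

section Duhamel

variable {a : ℝ} {f : ℝ → ℝ} {x : ℝ}

theorem duhamel_zero : duhamel a f 0 = 1 := by
  simp [duhamel]

theorem hasDerivWithinAt_duhamel (hf : ContinuousOn f (Ici 0)) (hx : 0 ≤ x) :
    HasDerivWithinAt (duhamel a f) (a * duhamel a f x + f x) (Ici 0) x := by
  have hexp : HasDerivAt (fun t => exp (a * t)) (exp (a * x) * a) x :=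
    ((hasDerivAt_id x).const_mul a).exp.congr_deriv (by simp)
  have hint := hasDerivWithinAt_integral_of_continuousOn_Ici
    (g := fun y => exp (-(a * y)) * f y) ((by fun_prop : Continuous _).continuousOn.mul hf) hx
  have hexp_neg : exp (a * x) * exp (-(a * x)) = 1 := by rw [← exp_add]; simp
  refine (hexp.hasDerivWithinAt.mul (hint.const_add 1)).congr_deriv ?_
  simp only [duhamel]
  linear_combination (f x) * hexp_neg

theorem differentiableOn_duhamel (hf : ContinuousOn f (Ici 0)) :
    DifferentiableOn ℝ (duhamel a f) (Ici 0) :=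
  fun _ hx => (hasDerivWithinAt_duhamel hf hx).differentiableWithinAt

theorem derivWithin_duhamel_eqOn (hf : ContinuousOn f (Ici 0)) :
    EqOn (derivWithin (duhamel a f) (Ici 0)) (fun x => a * duhamel a f x + f x) (Ici 0) :=
  fun _ hx => (hasDerivWithinAt_duhamel hf hx).derivWithin (uniqueDiffOn_Ici 0 _ hx)

theorem contDiffOn_duhamel : ∀ {n : ℕ}, ContDiffOn ℝ n f (Ici 0) →
    ContDiffOn ℝ (n + 1) (duhamel a f) (Ici 0)
  | n, hf => by
    have hfc := hf.continuousOn
    have hself : ContDiffOn ℝ n (duhamel a f) (Ici 0) := by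
      cases n with
      | zero => exact contDiffOn_zero.mpr (differentiableOn_duhamel hfc).continuousOn
      | succ m => exact contDiffOn_duhamel (hf.of_le (by norm_cast; omega))
    rw [contDiffOn_succ_iff_derivWithin (uniqueDiffOn_Ici 0)]
    exact ⟨differentiableOn_duhamel hfc, by simp,
      ((contDiffOn_const.mul hself).add hf).congr (derivWithin_duhamel_eqOn hfc)⟩

end Duhamel

noncomputable def duhamelSum {ι : Type*} [Fintype ι] (c a : ι → ℝ) (f : ℝ → ℝ) (x : ℝ) : ℝ :=
  ∑ i, c i * duhamel (a i) f x

section DuhamelSum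

variable {ι : Type*} [Fintype ι] {c a : ι → ℝ} {f : ℝ → ℝ} {x : ℝ}

theorem duhamelSum_zero : duhamelSum c a f 0 = ∑ i, c i := by
  simp [duhamelSum, duhamel_zero]

theorem hasDerivWithinAt_duhamelSum (hf : ContinuousOn f (Ici 0)) (hx : 0 ≤ x) :
    HasDerivWithinAt (duhamelSum c a f)
      ((∑ i, c i) * f x + duhamelSum (fun i => c i * a i) a f x) (Ici 0) x := by
  refine (HasDerivWithinAt.fun_sum fun i _ =>
    (hasDerivWithinAt_duhamel (a := a i) hf hx).const_mul (c i)).congr_deriv ?_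
  simp only [duhamelSum, Finset.sum_mul, ← Finset.sum_add_distrib]
  exact Finset.sum_congr rfl fun i _ => by ring

theorem contDiffOn_duhamelSum {n : ℕ} (hf : ContDiffOn ℝ n f (Ici 0)) :
    ContDiffOn ℝ (n + 1) (duhamelSum c a f) (Ici 0) :=
  ContDiffOn.sum fun _ _ => contDiffOn_const.mul (contDiffOn_duhamel hf)

theorem add_integral_eq_duhamelSum {K : ℝ → ℝ} (hK : ∀ x, K x = ∑ i, c i * exp (a i * x))
    (hf : ContinuousOn f (Ici 0)) (hx : 0 ≤ x) :
    K x + ∫ y in (0 : ℝ)..x, K (x - y) * f y = duhamelSum c a f x := by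
  have hint : ∀ i, IntervalIntegrable (fun y => exp (-(a i * y)) * f y) MeasureTheory.volume 0 x :=
    fun i => (((by fun_prop : Continuous fun y => exp (-(a i * y))).continuousOn.mul hf).mono
      (by rw [uIcc_of_le hx]; exact Icc_subset_Ici_self)).intervalIntegrable
  have hsplit : ∀ y, K (x - y) * f y = ∑ i, c i * exp (a i * x) * (exp (-(a i * y)) * f y) := by
    intro y
    simp only [hK, Finset.sum_mul, mul_sub, exp_sub, exp_neg, div_eq_mul_inv]
    exact Finset.sum_congr rfl fun i _ => by ring
  rw [funext hsplit, intervalIntegral.integral_finsetSum fun i _ => (hint i).const_mul _, hK]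
  simp only [intervalIntegral.integral_const_mul, duhamelSum, duhamel, ← Finset.sum_add_distrib]
  exact Finset.sum_congr rfl fun i _ => by ring

end DuhamelSum

section Renewal

variable {ι : Type*} [Fintype ι] {c a : ι → ℝ} {f g ξ 𝒲 : ℝ → ℝ} {x : ℝ}

theorem hasDerivWithinAt_of_eqOn_duhamelSum (hf : ContinuousOn f (Ici 0))
    (hg : EqOn g (duhamelSum c a f) (Ici 0)) (hx : x ∈ Ici 0) :
    HasDerivWithinAt g ((∑ i, c i) * f x + duhamelSum (fun i => c i * a i) a f x) (Ici 0) x :=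
  (hasDerivWithinAt_duhamelSum hf hx).congr_of_mem hg hx

theorem derivWithin_eqOn_of_eqOn_duhamelSum (hf : ContinuousOn f (Ici 0))
    (hg : EqOn g (duhamelSum c a f) (Ici 0)) :
    EqOn (derivWithin g (Ici 0))
      (fun x => (∑ i, c i) * f x + duhamelSum (fun i => c i * a i) a f x) (Ici 0) :=
  fun _ hx => (hasDerivWithinAt_of_eqOn_duhamelSum hf hg hx).derivWithin (uniqueDiffOn_Ici 0 _ hx)

theorem eqOn_duhamelSum_of_renewal {K : ℝ → ℝ} (hK : ∀ x, K x = ∑ i, c i * exp (a i * x))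
    (hf : ContinuousOn (ξ * 𝒲) (Ici 0))
    (hren : ∀ x : ℝ, 0 ≤ x → 𝒲 x = K x + ∫ y in (0 : ℝ)..x, K (x - y) * ξ y * 𝒲 y) :
    EqOn 𝒲 (duhamelSum c a (ξ * 𝒲)) (Ici 0) := by
  intro x hx
  rw [hren x hx, ← add_integral_eq_duhamelSum hK hf hx]
  simp only [Pi.mul_apply, mul_assoc]

theorem derivWithin_eqOn_of_renewal (hc : ∑ i, c i = 0) (hf : ContinuousOn (ξ * 𝒲) (Ici 0))
    (h𝒲 : EqOn 𝒲 (duhamelSum c a (ξ * 𝒲)) (Ici 0)) :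
    EqOn (derivWithin 𝒲 (Ici 0)) (duhamelSum (fun i => c i * a i) a (ξ * 𝒲)) (Ici 0) := by
  intro x hx
  simpa [hc] using derivWithin_eqOn_of_eqOn_duhamelSum hf h𝒲 hx

theorem derivWithin_derivWithin_eqOn_of_renewal (hc : ∑ i, c i = 0)
    (hf : ContinuousOn (ξ * 𝒲) (Ici 0)) (h𝒲 : EqOn 𝒲 (duhamelSum c a (ξ * 𝒲)) (Ici 0)) :
    EqOn (derivWithin (derivWithin 𝒲 (Ici 0)) (Ici 0))
      (fun x => (∑ i, c i * a i) * (ξ x * 𝒲 x)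
        + duhamelSum (fun i => c i * a i * a i) a (ξ * 𝒲) x) (Ici 0) :=
  derivWithin_eqOn_of_eqOn_duhamelSum hf (derivWithin_eqOn_of_renewal hc hf h𝒲)

theorem contDiffOn_three_of_renewal (hc : ∑ i, c i = 0) (hξ : ContDiffOn ℝ 1 ξ (Ici 0))
    (h𝒲c : ContinuousOn 𝒲 (Ici 0)) (h𝒲 : EqOn 𝒲 (duhamelSum c a (ξ * 𝒲)) (Ici 0)) :
    ContDiffOn ℝ 3 𝒲 (Ici 0) := by
  have hf : ContinuousOn (ξ * 𝒲) (Ici 0) := hξ.continuousOn.mul h𝒲c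
  have h𝒲₁ : ContDiffOn ℝ 1 𝒲 (Ici 0) :=
    (contDiffOn_duhamelSum (n := 0) (contDiffOn_zero.mpr hf)).congr h𝒲
  rw [show (3 : WithTop ℕ∞) = 2 + 1 from rfl, contDiffOn_succ_iff_derivWithin (uniqueDiffOn_Ici 0)]
  exact ⟨h𝒲₁.differentiableOn one_ne_zero, by simp,
    (contDiffOn_duhamelSum (n := 1) (hξ.mul h𝒲₁)).congr (derivWithin_eqOn_of_renewal hc hf h𝒲)⟩

theorem derivWithin_derivWithin_derivWithin_of_renewal (hc : ∑ i, c i = 0)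
    (hξ : ContDiffOn ℝ 1 ξ (Ici 0)) (h𝒲c : ContinuousOn 𝒲 (Ici 0))
    (h𝒲 : EqOn 𝒲 (duhamelSum c a (ξ * 𝒲)) (Ici 0)) (hx : x ∈ Ici 0) :
    derivWithin (derivWithin (derivWithin 𝒲 (Ici 0)) (Ici 0)) (Ici 0) x =
      (∑ i, c i * a i) * (derivWithin ξ (Ici 0) x * 𝒲 x + ξ x * derivWithin 𝒲 (Ici 0) x)
        + (∑ i, c i * a i * a i) * (ξ x * 𝒲 x)
        + duhamelSum (fun i => c i * a i * a i * a i) a (ξ * 𝒲) x := by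
  have hf : ContinuousOn (ξ * 𝒲) (Ici 0) := hξ.continuousOn.mul h𝒲c
  have h𝒲' : HasDerivWithinAt 𝒲 (derivWithin 𝒲 (Ici 0) x) (Ici 0) x :=
    (hasDerivWithinAt_of_eqOn_duhamelSum hf h𝒲 hx).differentiableWithinAt.hasDerivWithinAt
  have hξ' : HasDerivWithinAt ξ (derivWithin ξ (Ici 0) x) (Ici 0) x :=
    ((hξ.differentiableOn one_ne_zero) x hx).hasDerivWithinAt
  have h := ((hξ'.mul h𝒲').const_mul (∑ i, c i * a i)).add
    (hasDerivWithinAt_duhamelSum (c := fun i => c i * a i * a i) (a := a) hf hx)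
  rw [((h.congr_of_mem (derivWithin_derivWithin_eqOn_of_renewal hc hf h𝒲) hx).derivWithin
    (uniqueDiffOn_Ici 0 x hx))]
  simp only [Pi.mul_apply]
  ring

end Renewal

theorem stmt7_general (γ₂ γ₃ Υ₁ Υ₂ Υ₃ : ℝ) (hΥ : Υ₁ + Υ₂ + Υ₃ = 0) (W 𝒲 ξ : ℝ → ℝ)
    (hW : ∀ x : ℝ, W x = Υ₁ + Υ₂ * Real.exp (γ₂ * x) + Υ₃ * Real.exp (γ₃ * x))
    (h𝒲c : ContinuousOn 𝒲 (Ici 0))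
    (hξ : ContDiffOn ℝ 1 ξ (Ici 0))
    (hren : ∀ x : ℝ, 0 ≤ x →
      𝒲 x = W x + ∫ y in (0:ℝ)..x, W (x - y) * ξ y * 𝒲 y) :
    ContDiffOn ℝ 3 𝒲 (Ici 0) ∧
    (∀ x : ℝ, 0 ≤ x →
      derivWithin (derivWithin (derivWithin 𝒲 (Ici 0)) (Ici 0)) (Ici 0) x =
        (γ₂ + γ₃) * derivWithin (derivWithin 𝒲 (Ici 0)) (Ici 0) x
          + (Υ₂ * (γ₂ - γ₃) * ξ x - γ₂ * γ₃ - γ₃ * Υ₁ * ξ x)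
              * derivWithin 𝒲 (Ici 0) x
          + (Υ₂ * (γ₂ - γ₃) * derivWithin ξ (Ici 0) x
              + γ₂ * γ₃ * Υ₁ * ξ x - γ₃ * Υ₁ * derivWithin ξ (Ici 0) x) * 𝒲 x) ∧
    𝒲 0 = 0 ∧
    derivWithin 𝒲 (Ici 0) 0 = Υ₂ * γ₂ + Υ₃ * γ₃ ∧
    derivWithin (derivWithin 𝒲 (Ici 0)) (Ici 0) 0 = Υ₂ * γ₂ ^ 2 + Υ₃ * γ₃ ^ 2 := by
  have hc : ∑ i, ![Υ₁, Υ₂, Υ₃] i = 0 := by simp [Fin.sum_univ_three, hΥ]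
  have hK : ∀ x, W x = ∑ i, ![Υ₁, Υ₂, Υ₃] i * exp (![0, γ₂, γ₃] i * x) := by
    simp [Fin.sum_univ_three, hW]
  have hf : ContinuousOn (ξ * 𝒲) (Ici 0) := hξ.continuousOn.mul h𝒲c
  have h0 := eqOn_duhamelSum_of_renewal hK hf hren
  have h1 := derivWithin_eqOn_of_renewal hc hf h0
  have h2 := derivWithin_derivWithin_eqOn_of_renewal hc hf h0
  have h𝒲0 : 𝒲 0 = 0 := by rw [h0 self_mem_Ici, duhamelSum_zero, hc]
  refine ⟨contDiffOn_three_of_renewal hc hξ h𝒲c h0, fun x hx => ?_, h𝒲0, ?_, ?_⟩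
  · rw [derivWithin_derivWithin_derivWithin_of_renewal hc hξ h𝒲c h0 hx, h2 hx, h1 hx]
    obtain rfl : Υ₃ = -Υ₁ - Υ₂ := by linarith
    simp only [duhamelSum, Fin.sum_univ_three, Matrix.cons_val_zero, Matrix.cons_val_one,
      Matrix.cons_val, mul_zero, zero_mul, zero_add]
    ring
  · rw [h1 self_mem_Ici, duhamelSum_zero]
    simp [Fin.sum_univ_three]
  · rw [h2 self_mem_Ici]
    simp only [duhamelSum_zero, h𝒲0, Fin.sum_univ_three, Matrix.cons_val_zero,
      Matrix.cons_val_one, Matrix.cons_val, mul_zero, zero_add]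
    ring

/-- With W(x) = Υ₁ + Υ₂e^{γ₂x} + Υ₃e^{γ₃x}, Υ₁+Υ₂+Υ₃ = 0, the ω-scale
function 𝒲 solving the renewal equation is C³ and solves the stated
third-order ODE with the stated initial conditions. -/
theorem stmt7 (γ₂ γ₃ Υ₁ Υ₂ Υ₃ : ℝ) (hγ₂ : γ₂ ≠ 0) (hγ₃ : γ₃ ≠ 0)
    (hγ : γ₂ ≠ γ₃) (hΥ : Υ₁ + Υ₂ + Υ₃ = 0) (W 𝒲 ξ : ℝ → ℝ)
    (hW : ∀ x : ℝ, W x = Υ₁ + Υ₂ * Real.exp (γ₂ * x) + Υ₃ * Real.exp (γ₃ * x))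
    (h𝒲c : ContinuousOn 𝒲 (Ici 0))
    (hξ : ContDiffOn ℝ 1 ξ (Ici 0))
    (hren : ∀ x : ℝ, 0 ≤ x →
      𝒲 x = W x + ∫ y in (0:ℝ)..x, W (x - y) * ξ y * 𝒲 y) :
    ContDiffOn ℝ 3 𝒲 (Ici 0) ∧
    (∀ x : ℝ, 0 ≤ x →
      derivWithin (derivWithin (derivWithin 𝒲 (Ici 0)) (Ici 0)) (Ici 0) x =
        (γ₂ + γ₃) * derivWithin (derivWithin 𝒲 (Ici 0)) (Ici 0) x
          + (Υ₂ * (γ₂ - γ₃) * ξ x - γ₂ * γ₃ - γ₃ * Υ₁ * ξ x)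
              * derivWithin 𝒲 (Ici 0) x
          + (Υ₂ * (γ₂ - γ₃) * derivWithin ξ (Ici 0) x
              + γ₂ * γ₃ * Υ₁ * ξ x - γ₃ * Υ₁ * derivWithin ξ (Ici 0) x) * 𝒲 x) ∧
    𝒲 0 = 0 ∧
    derivWithin 𝒲 (Ici 0) 0 = Υ₂ * γ₂ + Υ₃ * γ₃ ∧
    derivWithin (derivWithin 𝒲 (Ici 0)) (Ici 0) 0 = Υ₂ * γ₂ ^ 2 + Υ₃ * γ₃ ^ 2 :=
  stmt7_general γ₂ γ₃ Υ₁ Υ₂ Υ₃ hΥ W 𝒲 ξ hW h𝒲c hξ hren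
end

section
/- Let C, D > 0, μ ∈ ℝ, σ > 0. Set L = 1/2 − μ/σ², M = √(L² − 2D/σ²) and G = √(L² − 2(C+D)/σ²), assuming L² − 2(C+D)/σ² > 0. For i = 1,2 let dᵢ = (−1)ⁱG + L, aᵢ = (−1)^{i+1}(M−G), bᵢ = (−1)ⁱ(M+G), cᵢ = 1 + 2(−1)ⁱG. Then for i = 1,2 the function h(s) = s^{dᵢ}·₂F₁(aᵢ; bᵢ; cᵢ; −s) satisfies (σ²s²/2)h''(s) + μ s h'(s) + (C/(s+1) + D)h(s) = 0 on (0,∞) whenever cᵢ is not a nonpositive integer. -/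
open Set

/-!
Substituting `h(s) = s ^ d * F(-s)`, the pricing ODE multiplied by `(s + 1) / s ^ (d + 1)` becomes
`-σ²/2` times the hypergeometric ODE for `F` at `z = -s`, provided `d` solves the indicial equation
`σ² d (d - 1) / 2 + μ d + C + D = 0` and `σ² a b = -2 C`, `a + b + 1 = c`, `σ² c = 2 σ² d + 2 μ`.
With `L = 1/2 - μ/σ²` the indicial roots are `L ± G`, and `a, b` are the roots of
`x² - (c - 1) x - 2C/σ²`, namely `∓(M - G)` and `±(M + G)`, because `M² - G² = 2C/σ²`.
-/

section EulerSubstitution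

variable {F : ℝ → ℝ} {d s : ℝ}

theorem hasDerivAt_rpow_mul_comp_neg {F' : ℝ} (hs : 0 < s) (hF : HasDerivAt F F' (-s)) :
    HasDerivAt (fun t : ℝ => t ^ d * F (-t)) (d * s ^ (d - 1) * F (-s) - s ^ d * F') s := by
  have hneg : HasDerivAt (fun t : ℝ => F (-t)) (-F') s :=
    (hF.comp s (hasDerivAt_neg s)).congr_deriv (mul_neg_one F')
  exact ((Real.hasDerivAt_rpow_const (Or.inl hs.ne')).mul hneg).congr_deriv (by ring)

variable (hF : ContDiffOn ℝ 2 F (Iio 0))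
include hF

theorem deriv_rpow_mul_comp_neg (hs : 0 < s) :
    deriv (fun t : ℝ => t ^ d * F (-t)) s = d * s ^ (d - 1) * F (-s) - s ^ d * deriv F (-s) := by
  have hFs : DifferentiableAt ℝ F (-s) :=
    (hF.differentiableOn two_ne_zero).differentiableAt (isOpen_Iio.mem_nhds (neg_neg_of_pos hs))
  exact (hasDerivAt_rpow_mul_comp_neg hs hFs.hasDerivAt).deriv

theorem deriv_deriv_rpow_mul_comp_neg (hs : 0 < s) :
    deriv (deriv fun t : ℝ => t ^ d * F (-t)) s =
      d * (d - 1) * s ^ (d - 2) * F (-s) - 2 * d * s ^ (d - 1) * deriv F (-s)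
        + s ^ d * deriv (deriv F) (-s) := by
  have hmem : Iio (0 : ℝ) ∈ nhds (-s) := isOpen_Iio.mem_nhds (neg_neg_of_pos hs)
  have hF₁ : HasDerivAt F (deriv F (-s)) (-s) :=
    ((hF.differentiableOn two_ne_zero).differentiableAt hmem).hasDerivAt
  have hF₂ : HasDerivAt (deriv F) (deriv (deriv F) (-s)) (-s) :=
    (((hF.deriv_of_isOpen isOpen_Iio le_rfl).differentiableOn one_ne_zero).differentiableAt
      hmem).hasDerivAt
  have hderiv : deriv (fun t : ℝ => t ^ d * F (-t)) =ᶠ[nhds s]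
      fun t => d * (t ^ (d - 1) * F (-t)) - t ^ d * deriv F (-t) := by
    filter_upwards [isOpen_Ioi.mem_nhds hs] with t ht
    rw [deriv_rpow_mul_comp_neg hF ht]
    ring
  have hsecond : HasDerivAt (fun t => d * (t ^ (d - 1) * F (-t)) - t ^ d * deriv F (-t)) _ s :=
    ((hasDerivAt_rpow_mul_comp_neg hs hF₁).const_mul d).sub (hasDerivAt_rpow_mul_comp_neg hs hF₂)
  rw [hderiv.deriv_eq, hsecond.deriv, show d - 1 - 1 = d - 2 by ring]
  ring

end EulerSubstitution

theorem pricing_ode_of_hypergeometric_ode {σ μ C D a b c d : ℝ} {F : ℝ → ℝ}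
    (hF : ContDiffOn ℝ 2 F (Iio 0))
    (hFode : ∀ z : ℝ, z < 0 →
      z * (1 - z) * deriv (deriv F) z + (c - (a + b + 1) * z) * deriv F z - a * b * F z = 0)
    (hindicial : σ ^ 2 * d * (d - 1) / 2 + μ * d + D + C = 0)
    (hab : σ ^ 2 * (a * b) + 2 * C = 0) (habc : a + b + 1 = c)
    (hc : 2 * d * σ ^ 2 + 2 * μ = c * σ ^ 2) {s : ℝ} (hs : 0 < s) :
    σ ^ 2 * s ^ 2 / 2 * deriv (deriv (fun t : ℝ => t ^ d * F (-t))) s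
        + μ * s * deriv (fun t : ℝ => t ^ d * F (-t)) s
        + (C / (s + 1) + D) * (s ^ d * F (-s)) = 0 := by
  rw [deriv_deriv_rpow_mul_comp_neg hF hs, deriv_rpow_mul_comp_neg hF hs]
  have hs₁ : s + 1 ≠ 0 := by positivity
  have hpow₁ : s ^ (d - 1) = s ^ (d - 2) * s := by
    rw [← Real.rpow_add_one hs.ne']; ring_nf
  have hpow₀ : s ^ d = s ^ (d - 2) * s ^ 2 := by
    rw [← Real.rpow_natCast, ← Real.rpow_add hs]; push_cast; ring_nf
  rw [hpow₁, hpow₀]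
  have hode := hFode (-s) (neg_neg_of_pos hs)
  set P := s ^ (d - 2)
  apply mul_left_cancel₀ hs₁
  rw [mul_zero]
  linear_combination (-(σ ^ 2) / 2 * P * s ^ 3) * hode
    + (P * s ^ 2 * (s + 1) * F (-s)) * hindicial
    + (-P * s ^ 3 / 2 * F (-s)) * hab
    + (σ ^ 2 * s ^ 4 / 2 * P * deriv F (-s)) * habc
    + (-(s + 1) / 2 * P * s ^ 3 * deriv F (-s)) * hc
    + (C * P * s ^ 2 * F (-s)) * mul_inv_cancel₀ hs₁

/-- `₂F₁(a; b; c; ·)` enters only through the hypergeometric ODE it satisfies on `(-∞, 0)`;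
the sign `e ∈ {1, -1}` encodes `(-1)ⁱ`. -/
theorem stmt10_general (C D μ σ : ℝ) (hC : 0 < C) (hσ : 0 < σ)
    (L M G : ℝ)
    (hL : L = 1 / 2 - μ / σ ^ 2)
    (hpos : 0 < L ^ 2 - 2 * (C + D) / σ ^ 2)
    (hM : M = Real.sqrt (L ^ 2 - 2 * D / σ ^ 2))
    (hG : G = Real.sqrt (L ^ 2 - 2 * (C + D) / σ ^ 2))
    (e : ℝ) (he : e = 1 ∨ e = -1)
    (a b c d : ℝ)
    (ha : a = -e * (M - G)) (hb : b = e * (M + G))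
    (hc : c = 1 + 2 * e * G) (hd : d = e * G + L)
    (F : ℝ → ℝ)
    (hF : ContDiffOn ℝ 2 F (Iio 0))
    (hFode : ∀ z : ℝ, z < 0 →
      z * (1 - z) * deriv (deriv F) z + (c - (a + b + 1) * z) * deriv F z
        - a * b * F z = 0) :
    ∀ s : ℝ, 0 < s →
      σ ^ 2 * s ^ 2 / 2
          * deriv (deriv (fun s' : ℝ => s' ^ (d : ℝ) * F (-s'))) s
        + μ * s * deriv (fun s' : ℝ => s' ^ (d : ℝ) * F (-s')) s
        + (C / (s + 1) + D) * (s ^ (d : ℝ) * F (-s)) = 0 := by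
  have hσ₂ : σ ^ 2 ≠ 0 := by positivity
  have hμ : μ = (1 / 2 - L) * σ ^ 2 := by
    rw [hL]; field_simp; ring
  have he₂ : e ^ 2 = 1 := by rcases he with rfl | rfl <;> norm_num
  have hG₂ : G ^ 2 * σ ^ 2 = L ^ 2 * σ ^ 2 - 2 * (C + D) := by
    rw [hG, Real.sq_sqrt hpos.le]; field_simp
  have hM₂ : M ^ 2 * σ ^ 2 = L ^ 2 * σ ^ 2 - 2 * D := by
    have hCD : 2 * D / σ ^ 2 ≤ 2 * (C + D) / σ ^ 2 := by gcongr; linarith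
    rw [hM, Real.sq_sqrt (by linarith)]; field_simp
  intro s hs
  refine pricing_ode_of_hypergeometric_ode hF hFode ?_ ?_ ?_ ?_ hs
  · rw [hd]; linear_combination (e * G + L) * hμ + σ ^ 2 * G ^ 2 / 2 * he₂ + hG₂ / 2
  · rw [ha, hb]; linear_combination σ ^ 2 * (G ^ 2 - M ^ 2) * he₂ + hG₂ - hM₂
  · rw [ha, hb, hc]; ring
  · rw [hd, hc]; linear_combination 2 * hμ

/-- With ω(s) = −C/(s+1) − D, the functions h(s) = s^{dᵢ}·₂F₁(aᵢ;bᵢ;cᵢ;−s)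
solve (σ²s²/2)h'' + μsh' + (C/(s+1)+D)h = 0 on (0,∞). Here ₂F₁ is
represented by any solution F of the Gauss hypergeometric ODE
z(1−z)F'' + (c − (a+b+1)z)F' − abF = 0 on (−∞,0); the sign e ∈ {1,−1}
encodes (−1)ⁱ. -/
theorem stmt10 (C D μ σ : ℝ) (hC : 0 < C) (hD : 0 < D) (hσ : 0 < σ)
    (L M G : ℝ)
    (hL : L = 1 / 2 - μ / σ ^ 2)
    (hpos : 0 < L ^ 2 - 2 * (C + D) / σ ^ 2)
    (hM : M = Real.sqrt (L ^ 2 - 2 * D / σ ^ 2))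
    (hG : G = Real.sqrt (L ^ 2 - 2 * (C + D) / σ ^ 2))
    (e : ℝ) (he : e = 1 ∨ e = -1)
    (a b c d : ℝ)
    (ha : a = -e * (M - G)) (hb : b = e * (M + G))
    (hc : c = 1 + 2 * e * G) (hd : d = e * G + L)
    (hcint : ∀ k : ℕ, c ≠ -(k : ℝ))
    (F : ℝ → ℝ)
    (hF : ContDiffOn ℝ 2 F (Iio 0))
    (hFode : ∀ z : ℝ, z < 0 →
      z * (1 - z) * deriv (deriv F) z + (c - (a + b + 1) * z) * deriv F z
        - a * b * F z = 0) :
    ∀ s : ℝ, 0 < s →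
      σ ^ 2 * s ^ 2 / 2
          * deriv (deriv (fun s' : ℝ => s' ^ (d : ℝ) * F (-s'))) s
        + μ * s * deriv (fun s' : ℝ => s' ^ (d : ℝ) * F (-s')) s
        + (C / (s + 1) + D) * (s ^ (d : ℝ) * F (-s)) = 0 :=
  stmt10_general C D μ σ hC hσ L M G hL hpos hM hG e he a b c d ha hb hc hd F hF hFode
end
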